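/- arXiv:1303.4941 — 3 statements merged into one kernel-verified Lean document; each statement's English description precedes it below -/
import Mathlib

section
/- Let α be a closed degree-0 morphism in a dg-category with a homotopy inverse a: that is, d(α) = 0, d(a) = 0, and there exist g, h with α∘a = 1 + d(h) and a∘α = 1 + d(g). Given elements U (of degree 3−n) and V (of degree 2−n) in the appropriate Hom-complexes satisfying d(U) = 0 and d(V) = −U∘α, the pair α̂_1 := −V∘a + (−1)^n U∘h, α̂_0 := (−1)^n α̂_1∘h∘α − (−1)^n α̂_1∘α∘g − (−1)^n V∘g solves the system d(α̂_1) = U and d(α̂_0) = α̂_1∘α + V. -/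
/-!
Write `ε = (-1)^(deg V)`. Then `α₀ = ε (α₁ (h α - α g) - V g)`, and `h α - α g` is closed because
`(d h) α` and `α (d g)` both equal `α a α - α`; so `d α₀ = ε (U (h α - α g) - d (V g))`, which
collapses to `ε U h α - V a α + V = α₁ α + V`. For `d α₁ = U`, the sign `(-1)^(deg U) = -ε` produced
by `d (U h)` makes `U (d h)` cancel against the `U (α a - 1)` coming from `d (V a)`.
-/

namespace GradedLeibniz

/-- A dg-category is modelled by one ℤ-graded ring whose homogeneous pieces `𝒜 i` are the
Hom-complexes in degree `i`. -/
def IsGradedLeibniz {A : Type*} [Ring A] (𝒜 : ℤ → AddSubgroup A) (d : A →+ A) : Prop :=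
  ∀ (i : ℤ) (x y : A), x ∈ 𝒜 i → d (x * y) = d x * y + (Int.negOnePow i : ℤ) • (x * d y)

variable {A : Type*} [Ring A] {𝒜 : ℤ → AddSubgroup A} {d : A →+ A}

theorem negOnePow_smul_negOnePow_smul (p : ℤ) (x : A) :
    (p.negOnePow : ℤ) • (p.negOnePow : ℤ) • x = x := by
  rw [smul_smul, ← Units.val_mul, Int.units_mul_self, Units.val_one, one_smul]

theorem d_mul_of_d_left_eq_zero (hd : IsGradedLeibniz 𝒜 d) {i : ℤ} {x : A} (y : A)
    (hx : x ∈ 𝒜 i) (hdx : d x = 0) : d (x * y) = (Int.negOnePow i : ℤ) • (x * d y) := by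
  rw [hd i x y hx, hdx, zero_mul, zero_add]

theorem d_mul_of_d_right_eq_zero (hd : IsGradedLeibniz 𝒜 d) {i : ℤ} {x y : A}
    (hx : x ∈ 𝒜 i) (hdy : d y = 0) : d (x * y) = d x * y := by
  rw [hd i x y hx, hdy, mul_zero, smul_zero, add_zero]

theorem mul_eq_mul_of_mul_eq_one_add {α a u w : A} (hαa : α * a = 1 + u) (haα : a * α = 1 + w) :
    u * α = α * w := by
  rw [eq_sub_of_add_eq' hαa.symm, eq_sub_of_add_eq' haα.symm, sub_mul, mul_sub, mul_assoc,
    one_mul, mul_one]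

theorem d_mul_sub_mul_homotopy_eq_zero (hd : IsGradedLeibniz 𝒜 d) {α a g h : A}
    (hα : α ∈ 𝒜 0) (hh : h ∈ 𝒜 (-1)) (hdα : d α = 0)
    (hαa : α * a = 1 + d h) (haα : a * α = 1 + d g) : d (h * α - α * g) = 0 := by
  rw [map_sub, d_mul_of_d_right_eq_zero hd hh hdα, d_mul_of_d_left_eq_zero hd g hα hdα,
    Int.negOnePow_zero, Units.val_one, one_smul, mul_eq_mul_of_mul_eq_one_add hαa haα,
    sub_self]

theorem d_outerHorn_fst (hd : IsGradedLeibniz 𝒜 d) {p : ℤ} {α a h U V : A}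
    (hU : U ∈ 𝒜 (p + 1)) (hV : V ∈ 𝒜 p) (hda : d a = 0) (hαa : α * a = 1 + d h)
    (hdU : d U = 0) (hdV : d V = -(U * α)) :
    d (-(V * a) + (p.negOnePow : ℤ) • (U * h)) = U := by
  have hdVa : d (V * a) = -(U * (1 + d h)) := by
    rw [d_mul_of_d_right_eq_zero hd hV hda, hdV, neg_mul, mul_assoc, hαa]
  have hdUh : (p.negOnePow : ℤ) • d (U * h) = -(U * d h) := by
    rw [d_mul_of_d_left_eq_zero hd h hU hdU, Int.negOnePow_succ, Units.val_neg, neg_smul,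
      smul_neg, negOnePow_smul_negOnePow_smul]
  rw [map_add, map_neg, map_zsmul, hdVa, hdUh, mul_add, mul_one]
  abel

theorem d_outerHorn_snd (hd : IsGradedLeibniz 𝒜 d) {p : ℤ} {α a g h U V α₁ : A}
    (hα : α ∈ 𝒜 0) (hh : h ∈ 𝒜 (-1)) (hV : V ∈ 𝒜 p) (hα₁ : α₁ ∈ 𝒜 p) (hdα : d α = 0)
    (hαa : α * a = 1 + d h) (haα : a * α = 1 + d g) (hdV : d V = -(U * α)) (hdα₁ : d α₁ = U) :
    d ((p.negOnePow : ℤ) • (α₁ * h * α) - (p.negOnePow : ℤ) • (α₁ * α * g)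
      - (p.negOnePow : ℤ) • (V * g)) = (p.negOnePow : ℤ) • (U * h * α) - V * a * α + V := by
  have hdα₁c : d (α₁ * (h * α - α * g)) = U * (h * α - α * g) := by
    rw [d_mul_of_d_right_eq_zero hd hα₁ (d_mul_sub_mul_homotopy_eq_zero hd hα hh hdα hαa haα),
      hdα₁]
  have hdVg : d (V * g) = -(U * α * g) + (p.negOnePow : ℤ) • (V * (a * α - 1)) := by
    rw [hd p V g hV, hdV, neg_mul, eq_sub_of_add_eq' haα.symm]
  rw [← smul_sub, mul_assoc, mul_assoc, ← mul_sub, map_sub, map_zsmul, map_zsmul, hdα₁c, hdVg,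
    smul_add, negOnePow_smul_negOnePow_smul]
  simp only [mul_sub, mul_assoc, mul_one, smul_sub, smul_neg]
  abel

theorem outerHorn_solution (hd : IsGradedLeibniz 𝒜 d)
    (hmul : ∀ (i j : ℤ) (x y : A), x ∈ 𝒜 i → y ∈ 𝒜 j → x * y ∈ 𝒜 (i + j)) {p : ℤ}
    {α a g h U V : A} (hα : α ∈ 𝒜 0) (ha : a ∈ 𝒜 0) (hh : h ∈ 𝒜 (-1))
    (hU : U ∈ 𝒜 (p + 1)) (hV : V ∈ 𝒜 p) (hdα : d α = 0) (hda : d a = 0)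
    (hαa : α * a = 1 + d h) (haα : a * α = 1 + d g) (hdU : d U = 0) (hdV : d V = -(U * α)) :
    let α₁ := -(V * a) + (p.negOnePow : ℤ) • (U * h)
    let α₀ := (p.negOnePow : ℤ) • (α₁ * h * α) - (p.negOnePow : ℤ) • (α₁ * α * g)
      - (p.negOnePow : ℤ) • (V * g)
    d α₁ = U ∧ d α₀ = α₁ * α + V := by
  intro α₁ α₀
  have hα₁ : α₁ ∈ 𝒜 p := by
    have hVa := hmul p 0 V a hV ha
    have hUh := hmul (p + 1) (-1) U h hU hh
    rw [add_zero] at hVa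
    rw [add_neg_cancel_right] at hUh
    exact add_mem (neg_mem hVa) (AddSubgroup.zsmul_mem _ hUh _)
  have hdα₁ : d α₁ = U := d_outerHorn_fst hd hU hV hda hαa hdU hdV
  refine ⟨hdα₁, ?_⟩
  rw [d_outerHorn_snd hd hα hh hV hα₁ hdα hαa haα hdV hdα₁, add_mul, neg_mul, smul_mul_assoc]
  abel

end GradedLeibniz

open GradedLeibniz in
theorem grothendieck_pridham_outer_horn_system_solution_general
    (A : Type*) [Ring A] (𝒜 : ℤ → AddSubgroup A) (d : A →+ A)
    (hmul : ∀ (i j : ℤ) (x y : A), x ∈ 𝒜 i → y ∈ 𝒜 j → x * y ∈ 𝒜 (i + j))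
    (hleib : ∀ (i : ℤ) (x y : A), x ∈ 𝒜 i →
      d (x * y) = d x * y + (Int.negOnePow i : ℤ) • (x * d y))
    (n : ℕ) (α a g h U V : A)
    (hα : α ∈ 𝒜 0) (ha : a ∈ 𝒜 0) (hh : h ∈ 𝒜 (-1))
    (hU : U ∈ 𝒜 (3 - (n : ℤ))) (hV : V ∈ 𝒜 (2 - (n : ℤ)))
    (hdα : d α = 0) (hda : d a = 0)
    (hαa : α * a = 1 + d h) (haα : a * α = 1 + d g)
    (hdU : d U = 0) (hdV : d V = -(U * α)) :
    ∀ α1 α0 : A,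
      α1 = -(V * a) + (-1 : ℤ) ^ n • (U * h) →
      α0 = (-1 : ℤ) ^ n • (α1 * h * α) - (-1 : ℤ) ^ n • (α1 * α * g)
            - (-1 : ℤ) ^ n • (V * g) →
      d α1 = U ∧ d α0 = α1 * α + V := by
  rintro α1 α0 rfl rfl
  have hsign : (-1 : ℤ) ^ n = ((2 - (n : ℤ)).negOnePow : ℤ) := by
    rw [Int.negOnePow_sub, Int.negOnePow_even 2 even_two, one_mul, Int.coe_negOnePow_natCast]
  rw [show (3 : ℤ) - n = 2 - n + 1 by ring] at hU
  rw [hsign]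
  exact outerHorn_solution hleib hmul hα ha hh hU hV hdα hda hαa haα hdU hdV

/-- Solving the outer-horn system `d α1 = U`, `d α0 = α1∘α + V` in the Hom-complexes of a
dg-category, modeled as a ℤ-graded ring `A` with grading `𝒜`, differential `d` of degree `+1`
squaring to zero and satisfying the graded Leibniz rule.  `α` is a closed degree-0 morphism with
homotopy inverse `a` (via homotopies `h`, `g`), `U` has degree `3 - n`, `V` degree `2 - n`. -/
theorem grothendieck_pridham_outer_horn_system_solution
    (A : Type*) [Ring A] (𝒜 : ℤ → AddSubgroup A) (d : A →+ A)
    (hd2 : ∀ x : A, d (d x) = 0)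
    (hdmem : ∀ (i : ℤ) (x : A), x ∈ 𝒜 i → d x ∈ 𝒜 (i + 1))
    (hmul : ∀ (i j : ℤ) (x y : A), x ∈ 𝒜 i → y ∈ 𝒜 j → x * y ∈ 𝒜 (i + j))
    (hleib : ∀ (i : ℤ) (x y : A), x ∈ 𝒜 i →
      d (x * y) = d x * y + (Int.negOnePow i : ℤ) • (x * d y))
    (n : ℕ) (α a g h U V : A)
    (hα : α ∈ 𝒜 0) (ha : a ∈ 𝒜 0) (hg : g ∈ 𝒜 (-1)) (hh : h ∈ 𝒜 (-1))
    (hU : U ∈ 𝒜 (3 - (n : ℤ))) (hV : V ∈ 𝒜 (2 - (n : ℤ)))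
    (hdα : d α = 0) (hda : d a = 0)
    (hαa : α * a = 1 + d h) (haα : a * α = 1 + d g)
    (hdU : d U = 0) (hdV : d V = -(U * α)) :
    ∀ α1 α0 : A,
      α1 = -(V * a) + (-1 : ℤ) ^ n • (U * h) →
      α0 = (-1 : ℤ) ^ n • (α1 * h * α) - (-1 : ℤ) ^ n • (α1 * α * g)
            - (-1 : ℤ) ^ n • (V * g) →
      d α1 = U ∧ d α0 = α1 * α + V :=
  grothendieck_pridham_outer_horn_system_solution_general A 𝒜 d hmul hleib n α a g h U V hα ha hh hU
    hV hdα hda hαa haα hdU hdV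
end

section
/- Square-zero lifting for the outer horn system: let I ⊂ B be an ideal with I² = 0. Suppose α̃_0, α̃_1 are elements over B whose error terms φ := d(α̃_1) − U and ψ := d(α̃_0) − α̃_1∘α − V lie in I·R, and satisfy d(φ) = 0 and d(ψ) = −φ∘α. Then with ε_1 := −ψ∘a + (−1)^n φ∘h and ε_0 := (−1)^n ε_1∘h∘α − (−1)^n ε_1∘α∘g − (−1)^n ψ∘g, the corrected elements α̂_1 := α̃_1 − ε_1 and α̂_0 := α̃_0 − ε_0 satisfy d(α̂_1) = U and d(α̂_0) = α̂_1∘α + V, and agree with α̃_1, α̃_0 modulo I. -/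
/-!
Both errors are removed by explicit primitives built from the homotopy inverse `a` of `α`.
Since `φ` is closed and `α a = 1 + d h`, the Leibniz rule gives `d(-ψ a) = φ α a = φ + φ d h`,
and the term `± φ h` removes `φ d h`, so `d ε₁ = φ`. In `d ε₀` the terms `ε₁ d h α` and
`ε₁ α d g` cancel (both equal `ε₁ α a α - ε₁ α`), and `a α = 1 + d g` turns `-ψ d g` into
`ψ - ψ a α`, leaving `d ε₀ = ψ + ε₁ α`. The corrections are products with `φ` or `ψ` on the
left, hence lie in the right ideal `I • ⊤` of `A`.
-/

def IsGradedLeibniz {A : Type*} [Ring A] (𝒜 : ℤ → AddSubgroup A) (d : A →+ A) : Prop :=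
  ∀ (i : ℤ) (x y : A), x ∈ 𝒜 i → d (x * y) = d x * y + (i.negOnePow : ℤ) • (x * d y)

section OuterHorn

variable {A : Type*} [Ring A]

/-- The paper's `ε₁` and `ε₀`, with the sign `(-1)^n` abstracted to `s`. -/
def outerHornCorrection₁ (s : ℤ) (a h φ ψ : A) : A :=
  -(ψ * a) + s • (φ * h)

def outerHornCorrection₀ (s : ℤ) (α g h ε₁ ψ : A) : A :=
  s • (ε₁ * h * α) - s • (ε₁ * α * g) - s • (ψ * g)

theorem Submodule.mul_mem_smul_top {B : Type*} [CommRing B] [Algebra B A] {I : Ideal B}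
    {x : A} (hx : x ∈ I • (⊤ : Submodule B A)) (y : A) : x * y ∈ I • (⊤ : Submodule B A) := by
  refine Submodule.smul_induction_on hx (fun b hb m _ => ?_) (fun x₁ x₂ h₁ h₂ => ?_)
  · rw [smul_mul_assoc]
    exact Submodule.smul_mem_smul hb trivial
  · rw [add_mul]
    exact add_mem h₁ h₂

section Ideal

variable {B : Type*} [CommRing B] [Algebra B A] {I : Ideal B}

open Submodule

theorem outerHornCorrection₁_mem_smul_top (s : ℤ) (a h : A) {φ ψ : A}
    (hφ : φ ∈ I • (⊤ : Submodule B A)) (hψ : ψ ∈ I • (⊤ : Submodule B A)) :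
    outerHornCorrection₁ s a h φ ψ ∈ I • (⊤ : Submodule B A) :=
  add_mem (neg_mem (mul_mem_smul_top hψ a)) (zsmul_mem (mul_mem_smul_top hφ h) s)

theorem outerHornCorrection₀_mem_smul_top (s : ℤ) (α g h : A) {ε₁ ψ : A}
    (hε₁ : ε₁ ∈ I • (⊤ : Submodule B A)) (hψ : ψ ∈ I • (⊤ : Submodule B A)) :
    outerHornCorrection₀ s α g h ε₁ ψ ∈ I • (⊤ : Submodule B A) :=
  sub_mem (sub_mem (zsmul_mem (mul_mem_smul_top (mul_mem_smul_top hε₁ h) α) s)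
    (zsmul_mem (mul_mem_smul_top (mul_mem_smul_top hε₁ α) g) s))
    (zsmul_mem (mul_mem_smul_top hψ g) s)

end Ideal

theorem outerHornCorrection₁_mem_graded {𝒜 : ℤ → AddSubgroup A} [SetLike.GradedMul 𝒜]
    {k : ℤ} (s : ℤ) {a h φ ψ : A} (ha : a ∈ 𝒜 0) (hh : h ∈ 𝒜 (-1))
    (hφ : φ ∈ 𝒜 (k + 1)) (hψ : ψ ∈ 𝒜 k) : outerHornCorrection₁ s a h φ ψ ∈ 𝒜 k := by
  have hψa := SetLike.mul_mem_graded hψ ha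
  have hφh := SetLike.mul_mem_graded hφ hh
  rw [add_zero] at hψa
  rw [add_neg_cancel_right] at hφh
  exact add_mem (neg_mem hψa) (zsmul_mem hφh s)

namespace IsGradedLeibniz

variable {𝒜 : ℤ → AddSubgroup A} {d : A →+ A}

theorem map_mul_of_map_right_eq_zero (hd : IsGradedLeibniz 𝒜 d) {i : ℤ} {x y : A}
    (hx : x ∈ 𝒜 i) (hy : d y = 0) : d (x * y) = d x * y := by
  rw [hd i x y hx, hy, mul_zero, smul_zero, add_zero]

theorem map_mul_of_map_left_eq_zero (hd : IsGradedLeibniz 𝒜 d) {i : ℤ} {x y : A}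
    (hx : x ∈ 𝒜 i) (hdx : d x = 0) : d (x * y) = (i.negOnePow : ℤ) • (x * d y) := by
  rw [hd i x y hx, hdx, zero_mul, zero_add]

theorem map_outerHornCorrection₁ (hd : IsGradedLeibniz 𝒜 d) {k : ℤ} {α a h φ ψ : A}
    (hda : d a = 0) (hαa : α * a = 1 + d h) (hφ : φ ∈ 𝒜 (k + 1)) (hψ : ψ ∈ 𝒜 k)
    (hdφ : d φ = 0) (hdψ : d ψ = -(φ * α)) :
    d (outerHornCorrection₁ (k.negOnePow : ℤ) a h φ ψ) = φ := by
  have hdψa : d (ψ * a) = -(φ * (1 + d h)) := by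
    rw [hd.map_mul_of_map_right_eq_zero hψ hda, hdψ, neg_mul, mul_assoc, hαa]
  have hdφh : d (φ * h) = -(k.negOnePow : ℤ) • (φ * d h) := by
    rw [hd.map_mul_of_map_left_eq_zero hφ hdφ, Int.negOnePow_succ, Units.val_neg]
  rw [outerHornCorrection₁, map_add, map_neg, map_zsmul, hdψa, hdφh, smul_smul, mul_neg,
    Int.units_coe_mul_self, mul_add, mul_one]
  abel

theorem map_outerHornCorrection₀ [SetLike.GradedMul 𝒜] (hd : IsGradedLeibniz 𝒜 d) {k : ℤ}
    {α a g h φ ψ ε₁ : A} (hα : α ∈ 𝒜 0) (hh : h ∈ 𝒜 (-1)) (hdα : d α = 0)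
    (hαa : α * a = 1 + d h) (haα : a * α = 1 + d g) (hψ : ψ ∈ 𝒜 k) (hdψ : d ψ = -(φ * α))
    (hε₁ : ε₁ = outerHornCorrection₁ (k.negOnePow : ℤ) a h φ ψ) (hε₁k : ε₁ ∈ 𝒜 k)
    (hdε₁ : d ε₁ = φ) :
    d (outerHornCorrection₀ (k.negOnePow : ℤ) α g h ε₁ ψ) = ψ + ε₁ * α := by
  set s : ℤ := (k.negOnePow : ℤ)
  have hε₁h := SetLike.mul_mem_graded hε₁k hh
  have hε₁α := SetLike.mul_mem_graded hε₁k hα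
  have hd₁ : d (ε₁ * h * α) = φ * h * α + s • (ε₁ * d h * α) := by
    rw [hd.map_mul_of_map_right_eq_zero hε₁h hdα, hd k _ _ hε₁k, hdε₁, add_mul, smul_mul_assoc]
  have hd₂ : d (ε₁ * α * g) = φ * α * g + s • (ε₁ * α * d g) := by
    rw [hd _ _ _ hε₁α, hd.map_mul_of_map_right_eq_zero hε₁k hdα, hdε₁, add_zero]
  have hd₃ : d (ψ * g) = -(φ * α * g) + s • (ψ * d g) := by
    rw [hd k _ _ hψ, hdψ, neg_mul]
  have hcancel : ε₁ * d h * α = ε₁ * α * d g := by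
    rw [eq_sub_of_add_eq' hαa.symm, eq_sub_of_add_eq' haα.symm]
    noncomm_ring
  have hψdg : ψ * d g = ψ * a * α - ψ := by
    rw [eq_sub_of_add_eq' haα.symm]
    noncomm_ring
  have hε₁α' : ε₁ * α = -(ψ * a * α) + s • (φ * h * α) := by
    rw [hε₁, outerHornCorrection₁, add_mul, neg_mul, smul_mul_assoc, mul_assoc, mul_assoc]
  rw [outerHornCorrection₀, map_sub, map_sub, map_zsmul, map_zsmul, map_zsmul, hd₁, hd₂, hd₃,
    hcancel, hψdg, hε₁α']
  simp only [smul_add, smul_neg, smul_sub, smul_smul, s, Int.units_coe_mul_self, one_zsmul]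
  abel

end IsGradedLeibniz

end OuterHorn

theorem coe_negOnePow_two_sub_natCast (n : ℕ) : ((2 - (n : ℤ)).negOnePow : ℤ) = (-1) ^ n := by
  rw [Int.negOnePow_sub, Int.negOnePow_even 2 even_two, one_mul, Int.coe_negOnePow_natCast]

theorem grothendieck_pridham_outer_horn_lifting_general
    (B : Type*) [CommRing B] (I : Ideal B)
    (A : Type*) [Ring A] [Algebra B A]
    (𝒜 : ℤ → AddSubgroup A) (d : A →+ A)
    (hdmem : ∀ (i : ℤ) (x : A), x ∈ 𝒜 i → d x ∈ 𝒜 (i + 1))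
    (hmul : ∀ (i j : ℤ) (x y : A), x ∈ 𝒜 i → y ∈ 𝒜 j → x * y ∈ 𝒜 (i + j))
    (hleib : ∀ (i : ℤ) (x y : A), x ∈ 𝒜 i →
      d (x * y) = d x * y + (Int.negOnePow i : ℤ) • (x * d y))
    (n : ℕ) (α a g h U V : A)
    (hα : α ∈ 𝒜 0) (ha : a ∈ 𝒜 0) (hh : h ∈ 𝒜 (-1))
    (hU : U ∈ 𝒜 (3 - (n : ℤ))) (hV : V ∈ 𝒜 (2 - (n : ℤ)))
    (hdα : d α = 0) (hda : d a = 0)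
    (hαa : α * a = 1 + d h) (haα : a * α = 1 + d g)
    (αt1 αt0 : A)
    (hαt1 : αt1 ∈ 𝒜 (2 - (n : ℤ))) (hαt0 : αt0 ∈ 𝒜 (1 - (n : ℤ))) :
    ∀ φ ψ ε1 ε0 : A,
      φ = d αt1 - U →
      ψ = d αt0 - αt1 * α - V →
      φ ∈ (I • (⊤ : Submodule B A) : Submodule B A) →
      ψ ∈ (I • (⊤ : Submodule B A) : Submodule B A) →
      d φ = 0 →
      d ψ = -(φ * α) →
      ε1 = -(ψ * a) + (-1 : ℤ) ^ n • (φ * h) →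
      ε0 = (-1 : ℤ) ^ n • (ε1 * h * α) - (-1 : ℤ) ^ n • (ε1 * α * g)
            - (-1 : ℤ) ^ n • (ψ * g) →
      d (αt1 - ε1) = U ∧
      d (αt0 - ε0) = (αt1 - ε1) * α + V ∧
      ε1 ∈ (I • (⊤ : Submodule B A) : Submodule B A) ∧
      ε0 ∈ (I • (⊤ : Submodule B A) : Submodule B A) := by
  intro φ ψ ε1 ε0 hφ hψ hφI hψI hdφ hdψ hε1 hε0
  have : SetLike.GradedMul 𝒜 := ⟨@fun i j _ _ => hmul i j _ _⟩
  have hd : IsGradedLeibniz 𝒜 d := hleib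
  set s : ℤ := ((2 - n : ℤ).negOnePow : ℤ) with hs
  replace hε1 : ε1 = outerHornCorrection₁ s a h φ ψ := by
    rw [hε1, outerHornCorrection₁, hs, coe_negOnePow_two_sub_natCast]
  replace hε0 : ε0 = outerHornCorrection₀ s α g h ε1 ψ := by
    rw [hε0, outerHornCorrection₀, hs, coe_negOnePow_two_sub_natCast]
  have hφk : φ ∈ 𝒜 (2 - n + 1) := by
    rw [hφ]
    refine sub_mem (hdmem _ _ hαt1) ?_
    convert hU using 2
    ring
  have hψk : ψ ∈ 𝒜 (2 - n) := by
    rw [hψ]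
    refine sub_mem (sub_mem ?_ ?_) hV
    · convert hdmem _ _ hαt0 using 2
      ring
    · simpa using hmul _ _ _ _ hαt1 hα
  have hε1k : ε1 ∈ 𝒜 (2 - n) := hε1 ▸ outerHornCorrection₁_mem_graded s ha hh hφk hψk
  have hdε1 : d ε1 = φ := hε1 ▸ hd.map_outerHornCorrection₁ hda hαa hφk hψk hdφ hdψ
  have hdε0 : d ε0 = ψ + ε1 * α :=
    hε0 ▸ hd.map_outerHornCorrection₀ hα hh hdα hαa haα hψk hdψ hε1 hε1k hdε1
  have hε1I := hε1 ▸ outerHornCorrection₁_mem_smul_top s a h hφI hψI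
  refine ⟨?_, ?_, hε1I, hε0 ▸ outerHornCorrection₀_mem_smul_top s α g h hε1I hψI⟩
  · rw [map_sub, hdε1, hφ]
    abel
  · rw [map_sub, hdε0, hψ, sub_mul]
    abel

/-- Square-zero lifting for the outer horn system.  `A` models the Hom-complexes of a
`B`-linear dg-category (a ℤ-graded `B`-algebra with differential `d`), `I ⊆ B` is an ideal
with `I² = 0`.  Given approximate solutions `α̃₁, α̃₀` whose error terms
`φ = d(α̃₁) − U`, `ψ = d(α̃₀) − α̃₁∘α − V` lie in `I·A` and satisfy `d(φ)=0`,
`d(ψ)=−φ∘α`, the corrected elements `α̂₁ = α̃₁ − ε₁`, `α̂₀ = α̃₀ − ε₀` solve the system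
exactly and agree with `α̃₁, α̃₀` modulo `I`. -/
theorem grothendieck_pridham_outer_horn_lifting
    (B : Type*) [CommRing B] (I : Ideal B) (hI : I ^ 2 = ⊥)
    (A : Type*) [Ring A] [Algebra B A]
    (𝒜 : ℤ → AddSubgroup A) (d : A →+ A)
    (hd2 : ∀ x : A, d (d x) = 0)
    (hdmem : ∀ (i : ℤ) (x : A), x ∈ 𝒜 i → d x ∈ 𝒜 (i + 1))
    (hmul : ∀ (i j : ℤ) (x y : A), x ∈ 𝒜 i → y ∈ 𝒜 j → x * y ∈ 𝒜 (i + j))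
    (hleib : ∀ (i : ℤ) (x y : A), x ∈ 𝒜 i →
      d (x * y) = d x * y + (Int.negOnePow i : ℤ) • (x * d y))
    (n : ℕ) (α a g h U V : A)
    (hα : α ∈ 𝒜 0) (ha : a ∈ 𝒜 0) (hg : g ∈ 𝒜 (-1)) (hh : h ∈ 𝒜 (-1))
    (hU : U ∈ 𝒜 (3 - (n : ℤ))) (hV : V ∈ 𝒜 (2 - (n : ℤ)))
    (hdα : d α = 0) (hda : d a = 0)
    (hαa : α * a = 1 + d h) (haα : a * α = 1 + d g)
    (hdU : d U = 0) (hdV : d V = -(U * α))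
    (αt1 αt0 : A)
    (hαt1 : αt1 ∈ 𝒜 (2 - (n : ℤ))) (hαt0 : αt0 ∈ 𝒜 (1 - (n : ℤ))) :
    ∀ φ ψ ε1 ε0 : A,
      φ = d αt1 - U →
      ψ = d αt0 - αt1 * α - V →
      φ ∈ (I • (⊤ : Submodule B A) : Submodule B A) →
      ψ ∈ (I • (⊤ : Submodule B A) : Submodule B A) →
      d φ = 0 →
      d ψ = -(φ * α) →
      ε1 = -(ψ * a) + (-1 : ℤ) ^ n • (φ * h) →
      ε0 = (-1 : ℤ) ^ n • (ε1 * h * α) - (-1 : ℤ) ^ n • (ε1 * α * g)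
            - (-1 : ℤ) ^ n • (ψ * g) →
      d (αt1 - ε1) = U ∧
      d (αt0 - ε0) = (αt1 - ε1) * α + V ∧
      ε1 ∈ (I • (⊤ : Submodule B A) : Submodule B A) ∧
      ε0 ∈ (I • (⊤ : Submodule B A) : Submodule B A) :=
  grothendieck_pridham_outer_horn_lifting_general B I A 𝒜 d hdmem hmul hleib n α a g h U V hα ha hh
    hU hV hdα hda hαa haα αt1 αt0 hαt1 hαt0
end

section
/- In a dg-category with differential d (degree +1, d² = 0, graded Leibniz), let α be closed of degree 0 with a∘α = 1 + d(g), α∘a = 1 + d(h), d(a) = 0, and let U, V satisfy d(U) = 0 and d(V) = −U∘α. Then the element α̂_0 := (−1)^n α̂_1∘h∘α − (−1)^n α̂_1∘α∘g − (−1)^n V∘g, where α̂_1 := −V∘a + (−1)^n U∘h, satisfies d(α̂_0) = α̂_1∘α + V. (Key computation: d(α̂_0) = (−1)^n U∘h∘α − V∘d(g), and −V∘d(g) + (−1)^n U∘h∘α = α̂_1∘α + V.) -/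
/-!
Writing `ε = (-1)ⁿ` for the Koszul sign of `V`, the Leibniz rule together with
`d V = -U∘α` and `α∘a = 1 + d h` gives `d α̂₁ = U`. Differentiating `α̂₀` term by term, the
contributions of `α̂₁` combine into `α̂₁∘(d h∘α - α∘d g)`, which vanishes because both
`d h∘α` and `α∘d g` equal `α∘a∘α - α`; what remains is `d α̂₀ = ε U∘h∘α - V∘d g`, and
substituting `d g = a∘α - 1` turns this into `α̂₁∘α + V`.
-/

namespace GradedLeibniz

variable {A : Type*} [Ring A] {𝒜 : ℤ → AddSubgroup A} {d : A →+ A}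

lemma d_mul_of_d_eq_zero
    (hleib : ∀ (i : ℤ) (x y : A), x ∈ 𝒜 i →
      d (x * y) = d x * y + (Int.negOnePow i : ℤ) • (x * d y))
    {i : ℤ} {x y : A} (hx : x ∈ 𝒜 i) (hy : d y = 0) :
    d (x * y) = d x * y := by
  rw [hleib i x y hx, hy, mul_zero, smul_zero, add_zero]

lemma d_neg_mul_add_smul_mul_eq
    (hleib : ∀ (i : ℤ) (x y : A), x ∈ 𝒜 i →
      d (x * y) = d x * y + (Int.negOnePow i : ℤ) • (x * d y))
    {i : ℤ} {α a h U V : A} (hU : U ∈ 𝒜 (i + 1)) (hV : V ∈ 𝒜 i)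
    (hda : d a = 0) (hαa : α * a = 1 + d h) (hdU : d U = 0) (hdV : d V = -(U * α)) :
    d (-(V * a) + (i.negOnePow : ℤ) • (U * h)) = U := by
  rw [map_add, map_neg, map_zsmul, d_mul_of_d_eq_zero hleib hV hda, hleib _ U h hU, hdU,
    Int.negOnePow_succ, hdV, zero_mul, zero_add, Units.val_neg, neg_smul, smul_neg, smul_smul,
    ← Units.val_mul, Int.units_mul_self, Units.val_one, one_smul, neg_mul, neg_neg,
    mul_assoc, hαa, mul_add, mul_one, add_neg_cancel_right]

lemma d_smul_sub_smul_sub_smul_eq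
    (hmul : ∀ (i j : ℤ) (x y : A), x ∈ 𝒜 i → y ∈ 𝒜 j → x * y ∈ 𝒜 (i + j))
    (hleib : ∀ (i : ℤ) (x y : A), x ∈ 𝒜 i →
      d (x * y) = d x * y + (Int.negOnePow i : ℤ) • (x * d y))
    {i : ℤ} {α a g h U V α₁ : A} (hα : α ∈ 𝒜 0) (hh : h ∈ 𝒜 (-1)) (hα₁ : α₁ ∈ 𝒜 i)
    (hV : V ∈ 𝒜 i) (hdα : d α = 0) (hαa : α * a = 1 + d h) (haα : a * α = 1 + d g)
    (hdα₁ : d α₁ = U) (hdV : d V = -(U * α)) :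
    d ((i.negOnePow : ℤ) • (α₁ * h * α) - (i.negOnePow : ℤ) • (α₁ * α * g)
        - (i.negOnePow : ℤ) • (V * g)) = (i.negOnePow : ℤ) • (U * h * α) - V * d g := by
  have hdα₁hα : d (α₁ * h * α) = U * h * α + (i.negOnePow : ℤ) • (α₁ * d h * α) := by
    rw [d_mul_of_d_eq_zero hleib (hmul _ _ _ _ hα₁ hh) hdα, hleib _ _ _ hα₁, hdα₁, add_mul,
      smul_mul_assoc]
  have hdα₁αg : d (α₁ * α * g) = U * α * g + (i.negOnePow : ℤ) • (α₁ * α * d g) := by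
    rw [hleib _ _ _ (hmul _ _ _ _ hα₁ hα), add_zero, d_mul_of_d_eq_zero hleib hα₁ hdα, hdα₁]
  have hdVg : d (V * g) = -(U * α) * g + (i.negOnePow : ℤ) • (V * d g) := by
    rw [hleib _ _ _ hV, hdV]
  have hdhα : d h * α = α * d g := by
    rw [eq_sub_of_add_eq' hαa.symm, eq_sub_of_add_eq' haα.symm, sub_mul, mul_sub, mul_assoc,
      one_mul, mul_one]
  rw [map_sub, map_sub, map_zsmul, map_zsmul, map_zsmul, hdα₁hα, hdα₁αg, hdVg]
  simp only [mul_assoc, hdhα, smul_add, smul_smul, ← Units.val_mul, Int.units_mul_self,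
    Units.val_one, one_smul, neg_mul, smul_neg]
  abel

end GradedLeibniz

open GradedLeibniz

theorem grothendieck_pridham_second_equation_solution_general
    (A : Type*) [Ring A] (𝒜 : ℤ → AddSubgroup A) (d : A →+ A)
    (hmul : ∀ (i j : ℤ) (x y : A), x ∈ 𝒜 i → y ∈ 𝒜 j → x * y ∈ 𝒜 (i + j))
    (hleib : ∀ (i : ℤ) (x y : A), x ∈ 𝒜 i →
      d (x * y) = d x * y + (Int.negOnePow i : ℤ) • (x * d y))
    (n : ℕ) (α a g h U V : A)
    (hα : α ∈ 𝒜 0) (ha : a ∈ 𝒜 0) (hh : h ∈ 𝒜 (-1))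
    (hU : U ∈ 𝒜 (3 - (n : ℤ))) (hV : V ∈ 𝒜 (2 - (n : ℤ)))
    (hdα : d α = 0) (hda : d a = 0)
    (hαa : α * a = 1 + d h) (haα : a * α = 1 + d g)
    (hdU : d U = 0) (hdV : d V = -(U * α)) :
    ∀ α1 α0 : A,
      α1 = -(V * a) + (-1 : ℤ) ^ n • (U * h) →
      α0 = (-1 : ℤ) ^ n • (α1 * h * α) - (-1 : ℤ) ^ n • (α1 * α * g)
            - (-1 : ℤ) ^ n • (V * g) →
      d α0 = α1 * α + V := by
  intro α1 α0 hα1_def hα0_def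
  have hε : ((2 - (n : ℤ)).negOnePow : ℤ) = (-1) ^ n := by
    simp [Int.negOnePow_sub, Int.coe_negOnePow_natCast, Int.negOnePow_even 2 even_two]
  have hU' : U ∈ 𝒜 (2 - n + 1) := by convert hU using 2; ring
  have hdα1 : d α1 = U := by
    rw [hα1_def, ← hε]; exact d_neg_mul_add_smul_mul_eq hleib hU' hV hda hαa hdU hdV
  have hα1 : α1 ∈ 𝒜 (2 - n) := by
    rw [hα1_def]
    refine add_mem (neg_mem ?_) (zsmul_mem ?_ _)
    · simpa using hmul _ _ _ _ hV ha
    · simpa using hmul _ _ _ _ hU' hh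
  rw [hα0_def, ← hε, d_smul_sub_smul_sub_smul_eq hmul hleib hα hh hα1 hV hdα hαa haα hdα1 hdV,
    hε, eq_sub_of_add_eq' haα.symm, hα1_def]
  simp only [mul_sub, add_mul, neg_mul, smul_mul_assoc, mul_assoc, mul_one]
  abel

/-- The element `α̂₀ := (−1)ⁿ α̂₁∘h∘α − (−1)ⁿ α̂₁∘α∘g − (−1)ⁿ V∘g`, where
`α̂₁ := −V∘a + (−1)ⁿ U∘h`, satisfies `d(α̂₀) = α̂₁∘α + V`, under the hypotheses
`d(U)=0`, `d(V)=−U∘α`, `α∘a = 1 + d(h)`, `a∘α = 1 + d(g)`, `d(α)=d(a)=0`.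
Hom-complexes of a dg-category are modeled by a ℤ-graded ring `A` with differential `d`. -/
theorem grothendieck_pridham_second_equation_solution
    (A : Type*) [Ring A] (𝒜 : ℤ → AddSubgroup A) (d : A →+ A)
    (hd2 : ∀ x : A, d (d x) = 0)
    (hdmem : ∀ (i : ℤ) (x : A), x ∈ 𝒜 i → d x ∈ 𝒜 (i + 1))
    (hmul : ∀ (i j : ℤ) (x y : A), x ∈ 𝒜 i → y ∈ 𝒜 j → x * y ∈ 𝒜 (i + j))
    (hleib : ∀ (i : ℤ) (x y : A), x ∈ 𝒜 i →
      d (x * y) = d x * y + (Int.negOnePow i : ℤ) • (x * d y))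
    (n : ℕ) (hn : 2 ≤ n) (α a g h U V : A)
    (hα : α ∈ 𝒜 0) (ha : a ∈ 𝒜 0) (hg : g ∈ 𝒜 (-1)) (hh : h ∈ 𝒜 (-1))
    (hU : U ∈ 𝒜 (3 - (n : ℤ))) (hV : V ∈ 𝒜 (2 - (n : ℤ)))
    (hdα : d α = 0) (hda : d a = 0)
    (hαa : α * a = 1 + d h) (haα : a * α = 1 + d g)
    (hdU : d U = 0) (hdV : d V = -(U * α)) :
    ∀ α1 α0 : A,
      α1 = -(V * a) + (-1 : ℤ) ^ n • (U * h) →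
      α0 = (-1 : ℤ) ^ n • (α1 * h * α) - (-1 : ℤ) ^ n • (α1 * α * g)
            - (-1 : ℤ) ^ n • (V * g) →
      d α0 = α1 * α + V :=
  grothendieck_pridham_second_equation_solution_general A 𝒜 d hmul hleib n α a g h U V hα ha hh hU
    hV hdα hda hαa haα hdU hdV
end
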